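/- Let X be a compact Hausdorff space, ∗ a continuous t-norm, and I : C(X,[0,1]) → [0,1] a functional that is normed (I(1_X) = 1), ∗-homogeneous (I(c ∗ φ) = c ∗ I(φ)), and comonotonically maxitive (I(φ ∨ ψ) = I(φ) ∨ I(ψ) for comonotone φ, ψ). Then I is monotone: ψ ≤ φ pointwise implies I(ψ) ≤ I(φ). -/

import Mathlib

open unitInterval

noncomputable section

/-- Two `[0,1]`-valued functions are comonotone. -/
def Comonotone {X : Type*} (f g : X → I) : Prop :=
  ∀ x y : X, 0 ≤ ((f x : ℝ) - (f y : ℝ)) * ((g x : ℝ) - (g y : ℝ))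
/-- Pointwise max of a constant with a continuous `[0,1]`-valued map. -/
def cSup {X : Type*} [TopologicalSpace X] (c : I) (f : C(X, I)) : C(X, I) :=
  ⟨fun x => c ⊔ f x, continuous_const.max f.continuous⟩

/-- Pointwise min of a constant with a continuous `[0,1]`-valued map. -/
def cInf {X : Type*} [TopologicalSpace X] (c : I) (f : C(X, I)) : C(X, I) :=
  ⟨fun x => c ⊓ f x, continuous_const.min f.continuous⟩

/-- Pointwise product of a constant with a continuous `[0,1]`-valued map. -/
def cMul {X : Type*} [TopologicalSpace X] (c : I) (f : C(X, I)) : C(X, I) :=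
  ⟨fun x => c * f x,
    Continuous.subtype_mk (continuous_const.mul (continuous_subtype_val.comp f.continuous)) _⟩

/-- Pointwise max of two continuous `[0,1]`-valued maps. -/
def fSup {X : Type*} [TopologicalSpace X] (f g : C(X, I)) : C(X, I) :=
  ⟨fun x => f x ⊔ g x, f.continuous.max g.continuous⟩
/-- A continuous t-norm on `[0,1]`. -/
structure Tnorm where
  op : I → I → I
  cont : Continuous fun p : I × I => op p.1 p.2
  assoc : ∀ a b c, op (op a b) c = op a (op b c)
  comm : ∀ a b, op a b = op b a
  mono : ∀ ⦃a b c d⦄, a ≤ b → c ≤ d → op a c ≤ op b d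
  op_one : ∀ s, op s 1 = s
/-- The map `x ↦ c ∗ f x` for a t-norm `∗`. -/
def tMul {X : Type*} [TopologicalSpace X] (T : Tnorm) (c : I) (f : C(X, I)) : C(X, I) :=
  ⟨fun x => T.op c (f x), T.cont.comp (continuous_const.prodMk f.continuous)⟩

/-! Comonotone maxitivity makes `J` monotone on comonotone pairs `f ≤ g`, and all monotone
functions of one `ψ` are pairwise comonotone. Fix `ε`, and `n` with `3/n` below the modulus of
uniform continuity of `∗` for `ε`. Let `χᵢ` be a continuous ramp of `ψ` from `0` at level
`(i-2)/n` to `1` at level `(i-1)/n`; then `ψ ≤ maxᵢ (i/n) ∗ χᵢ`, a monotone function of `ψ`,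
so `J ψ ≤ (i/n) ∗ J χᵢ` for some `i`. As `ψ ≤ φ`, the ramp `χ'ᵢ` of `φ` between the levels
`(i-3)/n` and `(i-2)/n` equals `1` wherever `χᵢ > 0`, so `J χᵢ ≤ J χ'ᵢ`; and
`((i-3)/n) ∗ χ'ᵢ ≤ φ` is a monotone function of `φ`. Hence
`J ψ ≤ (i/n) ∗ J χ'ᵢ ≤ ((i-3)/n) ∗ J χ'ᵢ + ε ≤ J φ + ε`. -/

open Set

section Comonotone

variable {X : Type*}

def IsMonotoneFunOf (f ψ : X → I) : Prop :=
  ∃ m : I → I, Monotone m ∧ f = m ∘ ψ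

theorem IsMonotoneFunOf.refl (ψ : X → I) : IsMonotoneFunOf ψ ψ :=
  ⟨id, monotone_id, rfl⟩

theorem IsMonotoneFunOf.comp {f ψ : X → I} (hf : IsMonotoneFunOf f ψ) {m : I → I}
    (hm : Monotone m) : IsMonotoneFunOf (m ∘ f) ψ := by
  obtain ⟨m', hm', rfl⟩ := hf
  exact ⟨m ∘ m', hm.comp hm', rfl⟩

theorem IsMonotoneFunOf.sup {f g ψ : X → I} (hf : IsMonotoneFunOf f ψ)
    (hg : IsMonotoneFunOf g ψ) : IsMonotoneFunOf (f ⊔ g) ψ := by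
  obtain ⟨m, hm, rfl⟩ := hf
  obtain ⟨m', hm', rfl⟩ := hg
  exact ⟨m ⊔ m', hm.sup hm', rfl⟩

theorem IsMonotoneFunOf.comonotone {f g ψ : X → I} (hf : IsMonotoneFunOf f ψ)
    (hg : IsMonotoneFunOf g ψ) : Comonotone f g := by
  obtain ⟨m, hm, rfl⟩ := hf
  obtain ⟨m', hm', rfl⟩ := hg
  intro x y
  rcases le_total (ψ x) (ψ y) with h | h
  · exact mul_nonneg_of_nonpos_of_nonpos (sub_nonpos.2 (hm h)) (sub_nonpos.2 (hm' h))
  · exact mul_nonneg (sub_nonneg.2 (hm h)) (sub_nonneg.2 (hm' h))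

theorem comonotone_of_pos_imp_eq_one {f g : X → I} (h : ∀ x, 0 < f x → g x = 1) :
    Comonotone f g := by
  have key : ∀ x y, f x < f y → 0 ≤ ((f x : ℝ) - f y) * (g x - g y) := by
    intro x y hxy
    have hgy : (g y : ℝ) = 1 := by rw [h y ((f x).2.1.trans_lt hxy)]; rfl
    exact mul_nonneg_of_nonpos_of_nonpos (sub_nonpos.2 hxy.le) (by linarith [(g x).2.2])
  intro x y
  rcases lt_trichotomy (f x) (f y) with hlt | heq | hgt
  · exact key x y hlt
  · simp [heq]
  · linarith [key y x hgt]

theorem le_of_pos_imp_eq_one {f g : X → I} (h : ∀ x, 0 < f x → g x = 1) (x : X) :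
    f x ≤ g x := by
  rcases (f x).2.1.eq_or_lt with h0 | hpos
  · exact Subtype.coe_le_coe.1 (h0 ▸ (g x).2.1)
  · exact (h x hpos).symm ▸ le_one'

end Comonotone

section Maxitive

variable {X : Type*} [TopologicalSpace X]

def ComonotoneMaxitive (J : C(X, I) → I) : Prop :=
  ∀ φ ψ : C(X, I), Comonotone (⇑φ) (⇑ψ) → J (fSup φ ψ) = J φ ⊔ J ψ

namespace ComonotoneMaxitive

variable {J : C(X, I) → I}

theorem le_of_le (hJ : ComonotoneMaxitive J) {f g : C(X, I)} (hc : Comonotone (⇑f) (⇑g))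
    (hle : ∀ x, f x ≤ g x) : J f ≤ J g := by
  have hfg : fSup f g = g := ContinuousMap.ext fun x => sup_eq_right.2 (hle x)
  simpa [hfg] using (hJ f g hc).ge

theorem le_of_pos_imp_eq_one (hJ : ComonotoneMaxitive J) {f g : C(X, I)}
    (h : ∀ x, 0 < f x → g x = 1) : J f ≤ J g :=
  hJ.le_of_le (comonotone_of_pos_imp_eq_one h) (_root_.le_of_pos_imp_eq_one h)

theorem exists_envelope (hJ : ComonotoneMaxitive J) (ψ : C(X, I)) {g : ℕ → C(X, I)}
    (hg : ∀ i, IsMonotoneFunOf (g i) ψ) (n : ℕ) :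
    ∃ E : C(X, I), IsMonotoneFunOf E ψ ∧ (∀ i ≤ n, ∀ x, g i x ≤ E x) ∧ ∃ i ≤ n, J E = J (g i) := by
  induction n with
  | zero => exact ⟨g 0, hg 0, fun i hi x => by rw [Nat.le_zero.1 hi], 0, le_rfl, rfl⟩
  | succ n ih =>
    obtain ⟨E, hE, hgE, i, hi, hJE⟩ := ih
    refine ⟨fSup E (g (n + 1)), hE.sup (hg (n + 1)), fun j hj x => ?_, ?_⟩
    · rcases Nat.le_succ_iff.1 hj with hj | rfl
      · exact (hgE j hj x).trans le_sup_left
      · exact le_sup_right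
    · rw [hJ _ _ (hE.comonotone (hg (n + 1)))]
      rcases max_choice (J E) (J (g (n + 1))) with h | h
      · exact ⟨i, hi.trans n.le_succ, h.trans hJE⟩
      · exact ⟨n + 1, le_rfl, h⟩

theorem exists_le_of_forall_exists_le (hJ : ComonotoneMaxitive J) (ψ : C(X, I))
    {g : ℕ → C(X, I)} (hg : ∀ i, IsMonotoneFunOf (g i) ψ) {n : ℕ}
    (hcover : ∀ x, ∃ i ≤ n, ψ x ≤ g i x) : ∃ i ≤ n, J ψ ≤ J (g i) := by
  obtain ⟨E, hE, hgE, i, hi, hJE⟩ := hJ.exists_envelope ψ hg n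
  refine ⟨i, hi, hJE ▸ hJ.le_of_le ((IsMonotoneFunOf.refl _).comonotone hE) fun x => ?_⟩
  obtain ⟨j, hj, hψ⟩ := hcover x
  exact hψ.trans (hgE j hj x)

end ComonotoneMaxitive

end Maxitive

namespace Tnorm

variable (T : Tnorm)

theorem op_le_left (a b : I) : T.op a b ≤ a :=
  (T.mono le_rfl le_one').trans_eq (T.op_one a)

theorem op_le_right (a b : I) : T.op a b ≤ b :=
  T.comm a b ▸ T.op_le_left b a

theorem exists_dist_op_lt {ε : ℝ} (hε : 0 < ε) :
    ∃ δ > 0, ∀ a b s : I, dist a b < δ → dist (T.op a s) (T.op b s) < ε := by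
  obtain ⟨δ, hδ, h⟩ := Metric.uniformContinuous_iff.1
    (CompactSpace.uniformContinuous_of_continuous T.cont) ε hε
  refine ⟨δ, hδ, fun a b s hab => h (a := (a, s)) (b := (b, s)) ?_⟩
  rwa [Prod.dist_eq, dist_self, max_eq_left dist_nonneg]

theorem exists_nat_op_le_add {ε : ℝ} (hε : 0 < ε) :
    ∃ n : ℕ, 0 < (n : ℝ) ∧ ∀ (i : ℕ) (s : I), (T.op (projIcc 0 1 zero_le_one (i / n)) s : ℝ) ≤
      T.op (projIcc 0 1 zero_le_one ((i - 3) / n)) s + ε := by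
  obtain ⟨δ, hδ, hT⟩ := T.exists_dist_op_lt hε
  obtain ⟨n, hn⟩ := exists_nat_gt (3 / δ)
  have hn0 : (0 : ℝ) < n := (div_pos three_pos hδ).trans hn
  refine ⟨n, hn0, fun i s => ?_⟩
  suffices hdist : dist (projIcc 0 1 zero_le_one (i / n) : I)
      (projIcc 0 1 zero_le_one ((i - 3) / n)) < δ by
    linarith [(abs_sub_lt_iff.1 (hT _ _ s hdist)).1]
  refine ((LipschitzWith.projIcc zero_le_one).dist_le_mul _ _).trans_lt ?_
  rw [NNReal.coe_one, one_mul, Real.dist_eq, ← sub_div, sub_sub_cancel, abs_of_pos (by positivity)]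
  exact (div_lt_iff₀ hn0).2 (by rw [div_lt_iff₀ hδ] at hn; linarith)

end Tnorm

theorem ComonotoneMaxitive.op_le_of_forall_pos_le {X : Type*} [TopologicalSpace X]
    {J : C(X, I) → I} (hJ : ComonotoneMaxitive J) {T : Tnorm}
    (hhom : ∀ (c : I) (φ : C(X, I)), J (tMul T c φ) = T.op c (J φ)) {c : I} {φ χ : C(X, I)}
    (hχ : IsMonotoneFunOf χ φ) (hc : ∀ x, 0 < χ x → c ≤ φ x) : T.op c (J χ) ≤ J φ := by
  rw [← hhom]
  refine hJ.le_of_le ((hχ.comp fun _ _ h => T.mono le_rfl h).comonotone (.refl _)) fun x => ?_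
  rcases (χ x).2.1.eq_or_lt with h0 | hpos
  · exact (T.op_le_right _ _).trans (Subtype.coe_le_coe.1 (h0 ▸ (φ x).2.1))
  · exact (T.op_le_left _ _).trans (hc x hpos)

def ramp (p q : ℝ) : C(I, I) :=
  ⟨fun s => projIcc 0 1 zero_le_one ((s - p) / (q - p)), by fun_prop⟩

theorem ramp_monotone {p q : ℝ} (hpq : p ≤ q) : Monotone (ramp p q) := fun _ _ hab =>
  monotone_projIcc zero_le_one <|
    div_le_div_of_nonneg_right (sub_le_sub_right (Subtype.coe_le_coe.2 hab) p) (sub_nonneg.2 hpq)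

theorem ramp_eq_one {p q : ℝ} (hpq : p < q) {s : I} (hs : q ≤ s) : ramp p q s = 1 :=
  projIcc_of_right_le zero_le_one ((one_le_div (sub_pos.2 hpq)).2 (sub_le_sub_right hs p))

theorem lt_of_ramp_pos {p q : ℝ} (hpq : p ≤ q) {s : I} (hs : 0 < ramp p q s) : p < s := by
  by_contra! h
  exact hs.ne' (projIcc_of_le_left zero_le_one
    (div_nonpos_of_nonpos_of_nonneg (sub_nonpos.2 h) (sub_nonneg.2 hpq)))

theorem projIcc_le_of_ramp_pos {p q : ℝ} (hpq : p ≤ q) {s : I} (hs : 0 < ramp p q s) :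
    (projIcc 0 1 zero_le_one p : I) ≤ s :=
  (monotone_projIcc zero_le_one (lt_of_ramp_pos hpq hs).le).trans_eq (projIcc_val zero_le_one s)

theorem exists_le_projIcc_and_ramp_eq_one {n : ℕ} (hn : 0 < (n : ℝ)) (s : I) :
    ∃ i ≤ n, s ≤ (projIcc 0 1 zero_le_one (i / n) : I) ∧
      ramp ((i - 2) / n) ((i - 1) / n) s = 1 := by
  have hsn : 0 ≤ (s : ℝ) * n := mul_nonneg s.2.1 hn.le
  refine ⟨⌈(s : ℝ) * n⌉₊, Nat.ceil_le.2 (mul_le_of_le_one_left hn.le s.2.2), ?_, ?_⟩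
  · refine (projIcc_val zero_le_one s).ge.trans (monotone_projIcc zero_le_one ?_)
    exact (le_div_iff₀ hn).2 (Nat.le_ceil _)
  · refine ramp_eq_one (div_lt_div_of_pos_right (by linarith) hn) ((div_le_iff₀ hn).2 ?_)
    linarith [Nat.ceil_lt_add_one hsn]

theorem normed_homog_comax_is_monotone_general {X : Type*} [TopologicalSpace X]
    (T : Tnorm) (J : C(X, I) → I)
    (hhom : ∀ (c : I) (φ : C(X, I)), J (tMul T c φ) = T.op c (J φ))
    (hmax : ∀ φ ψ : C(X, I), Comonotone (⇑φ) (⇑ψ) → J (fSup φ ψ) = J φ ⊔ J ψ) :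
    ∀ φ ψ : C(X, I), (∀ x, ψ x ≤ φ x) → J ψ ≤ J φ := by
  intro φ ψ hle
  have hJ : ComonotoneMaxitive J := hmax
  refine Subtype.coe_le_coe.1 (le_of_forall_pos_le_add fun ε hε => ?_)
  obtain ⟨n, hn, hT⟩ := T.exists_nat_op_le_add hε
  have hχ : ∀ i : ℕ, ((i : ℝ) - 2) / n < (i - 1) / n := fun i =>
    div_lt_div_of_pos_right (by linarith) hn
  have hχ' : ∀ i : ℕ, ((i : ℝ) - 3) / n < (i - 2) / n := fun i =>
    div_lt_div_of_pos_right (by linarith) hn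
  let t (i : ℕ) : I := projIcc 0 1 zero_le_one (i / n)
  let χ (i : ℕ) : C(X, I) := (ramp ((i - 2) / n) ((i - 1) / n)).comp ψ
  let χ' (i : ℕ) : C(X, I) := (ramp ((i - 3) / n) ((i - 2) / n)).comp φ
  have hcover : ∀ x, ∃ i ≤ n, ψ x ≤ tMul T (t i) (χ i) x := fun x => by
    obtain ⟨i, hi, hψt, hramp⟩ := exists_le_projIcc_and_ramp_eq_one hn (ψ x)
    exact ⟨i, hi, hψt.trans_eq (by simp [tMul, t, χ, hramp, T.op_one])⟩
  obtain ⟨i, -, hi⟩ := hJ.exists_le_of_forall_exists_le ψ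
    (fun i => ((IsMonotoneFunOf.refl _).comp (ramp_monotone (hχ i).le)).comp
      fun _ _ h => T.mono le_rfl h) hcover
  have hsteep : ∀ x, 0 < χ i x → χ' i x = 1 := fun x hx =>
    ramp_eq_one (hχ' i) ((lt_of_ramp_pos (hχ i).le hx).le.trans (hle x))
  have hφ := hJ.op_le_of_forall_pos_le hhom (χ := χ' i)
    ((IsMonotoneFunOf.refl _).comp (ramp_monotone (hχ' i).le))
    fun _ hx => projIcc_le_of_ramp_pos (hχ' i).le hx
  calc (J ψ : ℝ) ≤ J (tMul T (t i) (χ i)) := hi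
    _ = T.op (t i) (J (χ i)) := by rw [hhom]
    _ ≤ T.op (t i) (J (χ' i)) := T.mono le_rfl (hJ.le_of_pos_imp_eq_one hsteep)
    _ ≤ T.op (projIcc 0 1 zero_le_one ((i - 3) / n)) (J (χ' i)) + ε := hT i _
    _ ≤ J φ + ε := by linarith [Subtype.coe_le_coe.2 hφ]

/-- A normed, `∗`-homogeneous and comonotonically maxitive functional on `C(X,[0,1])`
is monotone. -/
theorem normed_homog_comax_is_monotone {X : Type*} [TopologicalSpace X] [CompactSpace X]
    [T2Space X] (T : Tnorm) (J : C(X, I) → I)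
    (hone : J (ContinuousMap.const X 1) = 1)
    (hhom : ∀ (c : I) (φ : C(X, I)), J (tMul T c φ) = T.op c (J φ))
    (hmax : ∀ φ ψ : C(X, I), Comonotone (⇑φ) (⇑ψ) → J (fSup φ ψ) = J φ ⊔ J ψ) :
    ∀ φ ψ : C(X, I), (∀ x, ψ x ≤ φ x) → J ψ ≤ J φ :=
  normed_homog_comax_is_monotone_general T J hhom hmax
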